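/- If a weighted graph (Γ,μ) satisfies (p0), the volume doubling property (VD), and max_{y∈B(x,R)} E_y(x,R) ≤ C·E(x,R) for all x∈Γ, R>0, then there is c>0 such that E(x,R) ≥ c·R² for all x∈Γ, R>0 (equivalently, the time-doubling exponent β satisfies β ≥ 2). -/

import Mathlib

open Classical

noncomputable section

/-- A weighted graph: symmetric nonnegative edge weights, zero on the diagonal,
positive exactly on edges, with finitely many neighbours at each vertex. -/
structure WeightedGraph (V : Type*) where
  w : V → V → ℝ
  w_symm : ∀ x y, w x y = w y x
  w_nonneg : ∀ x y, 0 ≤ w x y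
  w_irrefl : ∀ x, w x x = 0
  locFin : ∀ x, {y | 0 < w x y}.Finite

/-- A space-time scale function is proper. -/
def properF (F : ℕ → ℝ) : Prop :=
  StrictMono F ∧
  (∃ D : ℝ, 0 < D ∧ ∀ R : ℕ, F (2 * R) ≤ D * F R) ∧
  (∀ R S : ℕ, F R + F S ≤ F (R + S)) ∧
  (∃ (A : ℕ) (B : ℝ), 1 < A ∧ 1 < B ∧ ∀ R : ℕ, B * F R ≤ F (A * R)) ∧
  (∃ c : ℝ, 0 < c ∧ ∀ R : ℕ, c * (R : ℝ) ^ 2 ≤ F R)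

/-- A proper scale function satisfying the strong anti-doubling property `B_F > A_F`. -/
def veryProperF (F : ℕ → ℝ) : Prop :=
  properF F ∧
  (∃ (A : ℕ) (B : ℝ), 1 < A ∧ (A : ℝ) < B ∧ ∀ R : ℕ, B * F R ≤ F (A * R))

/-- The (generalized) inverse of a scale function. -/
def finvF (F : ℕ → ℝ) (t : ℝ) : ℕ := sInf {R : ℕ | t ≤ F R}

/-- The sub-Gaussian kernel `k(n,R)`: the maximal integer `k ≥ 1` with
`n/k ≤ F(⌊R/k⌋)`, and `0` if there is none. -/
def kkerF (F : ℕ → ℝ) (n R : ℕ) : ℕ :=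
  sSup {k : ℕ | 1 ≤ k ∧ (n : ℝ) / (k : ℝ) ≤ F (R / k)}

namespace WeightedGraph

variable {V : Type*}

/-- The underlying simple graph. -/
def toSimpleGraph (G : WeightedGraph V) : SimpleGraph V where
  Adj x y := 0 < G.w x y
  symm := by
    constructor
    intro x y h
    rw [G.w_symm y x]
    exact h
  loopless := by
    constructor
    intro x h
    rw [G.w_irrefl x] at h
    exact lt_irrefl 0 h

/-- The graph (shortest path) distance. -/
def gdist (G : WeightedGraph V) (x y : V) : ℕ := G.toSimpleGraph.dist x y

/-- The open metric ball `B(x,r) = {y : d(x,y) < r}`. -/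
def ball (G : WeightedGraph V) (x : V) (r : ℝ) : Set V := {y | (G.gdist x y : ℝ) < r}

/-- The sphere `S(x,R) = {y : d(x,y) = R}`. -/
def sphere (G : WeightedGraph V) (x : V) (R : ℕ) : Set V := {y | G.gdist x y = R}

/-- The external boundary of a set. -/
def extBoundary (G : WeightedGraph V) (A : Set V) : Set V :=
  {y | y ∉ A ∧ ∃ x ∈ A, 0 < G.w x y}

/-- The vertex measure `μ(x) = Σ_{y ∼ x} μ_{xy}`. -/
def mu (G : WeightedGraph V) (x : V) : ℝ := ∑' y, G.w x y

/-- The volume `V(x,r) = μ(B(x,r))`. -/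
def vol (G : WeightedGraph V) (x : V) (r : ℝ) : ℝ := ∑' y : G.ball x r, G.mu y.1

/-- The volume of the annulus `v(x,s,r) = V(x,r) - V(x,s)`. -/
def annv (G : WeightedGraph V) (x : V) (s r : ℝ) : ℝ := G.vol x r - G.vol x s

/-- One-step transition probability `P(x,y) = μ_{xy}/μ(x)`. -/
def Pstep (G : WeightedGraph V) (x y : V) : ℝ := G.w x y / G.mu x

/-- `n`-step transition probability. -/
def Pn (G : WeightedGraph V) : ℕ → V → V → ℝ
  | 0, x, y => if x = y then 1 else 0
  | n + 1, x, y => ∑' z, G.Pstep x z * Pn G n z y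

/-- The heat kernel `p_n(x,y) = P_n(x,y)/μ(y)`. -/
def hk (G : WeightedGraph V) (n : ℕ) (x y : V) : ℝ := G.Pn n x y / G.mu y

/-- One step of the walk killed on exiting `A`. -/
def PstepA (G : WeightedGraph V) (A : Set V) (x y : V) : ℝ :=
  if x ∈ A ∧ y ∈ A then G.Pstep x y else 0

/-- `n`-step transition probability of the killed walk. -/
def PnA (G : WeightedGraph V) (A : Set V) : ℕ → V → V → ℝ
  | 0, x, y => if x = y ∧ x ∈ A then 1 else 0
  | n + 1, x, y => ∑' z, G.PstepA A x z * PnA G A n z y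

/-- The local Green kernel `g^A(y,z) = (Σ_k P_k^A(y,z))/μ(z)`. -/
def green (G : WeightedGraph V) (A : Set V) (y z : V) : ℝ :=
  (∑' k, G.PnA A k y z) / G.mu z

/-- The mean exit time `E_z(A) = Σ_{k≥0} P_z(T_A > k) = Σ_k Σ_{y} P_k^A(z,y)`. -/
def meanExit (G : WeightedGraph V) (A : Set V) (z : V) : ℝ :=
  ∑' (k : ℕ), ∑' (y : V), G.PnA A k z y

/-- `E(x,r)`: the mean exit time from the ball `B(x,r)` started at `x`. -/
def mexit (G : WeightedGraph V) (x : V) (r : ℝ) : ℝ := G.meanExit (G.ball x r) x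

/-- `e(x,t) = min{R ∈ ℕ : E(x,R) ≥ t}`, the inverse of the mean exit time. -/
def einv (G : WeightedGraph V) (x : V) (t : ℝ) : ℕ := sInf {R : ℕ | t ≤ G.mexit x R}

/-- `P(T_A < n)` for the walk started at `z`. -/
def exitProbLT (G : WeightedGraph V) (A : Set V) (z : V) (n : ℕ) : ℝ :=
  1 - ∑' y, G.PnA A (n - 1) z y

/-- The local sub-Gaussian kernel `k̲(x,n,R)`. -/
def lker (G : WeightedGraph V) (x : V) (n R : ℕ) : ℕ :=
  sSup {k : ℕ | 1 ≤ k ∧ (n : ℝ) / (k : ℝ) ≤ ⨅ y : G.ball x R, G.mexit y.1 ((R / k : ℕ) : ℝ)}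

/-- `u` is harmonic on `A`. -/
def Harmonic (G : WeightedGraph V) (A : Set V) (u : V → ℝ) : Prop :=
  ∀ x ∈ A, (∑' y, G.Pstep x y * u y) = u x

/-- The Dirichlet form (energy). -/
def dirichletEnergy (G : WeightedGraph V) (f : V → ℝ) : ℝ :=
  (1 / 2) * ∑' p : V × V, G.w p.1 p.2 * (f p.1 - f p.2) ^ 2

/-- The resistance between two disjoint sets. -/
def resistance (G : WeightedGraph V) (A B : Set V) : ℝ :=
  (sInf (G.dirichletEnergy '' {f | (∀ x ∈ A, f x = 1) ∧ ∀ x ∈ B, f x = 0}))⁻¹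

/-- The resistance of the annulus `ρ(x,s,r) = ρ(B(x,s), Γ∖B(x,r))`. -/
def rho (G : WeightedGraph V) (x : V) (s r : ℝ) : ℝ :=
  G.resistance (G.ball x s) (G.ball x r)ᶜ

/-- The kernel of the `(λ,m)`-resolvent `((λ+1)I - P)^{-m}`. -/
def resolventKer (G : WeightedGraph V) (lam : ℝ) (m : ℕ) (x y : V) : ℝ :=
  (∑' k : ℕ, (Nat.choose (k + m - 1) k : ℝ) * (1 + lam) ^ (-((m : ℤ) + (k : ℤ))) * G.Pn k x y) /
    G.mu y

/-- `F(R) = inf_x E(x,R)`. -/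
def Fm (G : WeightedGraph V) (R : ℕ) : ℝ := ⨅ x : V, G.mexit x R

/-- Condition `(p0)`: controlled weights. -/
def P0 (G : WeightedGraph V) (p0 : ℝ) : Prop :=
  ∀ x y : V, 0 < G.w x y → p0 ≤ G.w x y / G.mu x

/-- Condition `(VD)`: volume doubling. -/
def VD (G : WeightedGraph V) : Prop :=
  ∃ D : ℝ, 0 < D ∧ ∀ (x : V) (R : ℝ), 0 < R → G.vol x (2 * R) ≤ D * G.vol x R

/-- Condition `(TC)`: the time comparison principle. -/
def TC (G : WeightedGraph V) : Prop :=
  ∃ C : ℝ, 1 < C ∧ ∀ (x : V) (R : ℝ), 0 < R → ∀ y ∈ G.ball x R,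
    G.mexit x (2 * R) ≤ C * G.mexit y R

/-- Condition `(TD)`: time doubling. -/
def TD (G : WeightedGraph V) : Prop :=
  ∃ D : ℝ, 0 < D ∧ ∀ (x : V) (R : ℝ), 0 ≤ R → G.mexit x (2 * R) ≤ D * G.mexit x R

/-- Condition `(E)`: the mean exit time is uniform in the space. -/
def UniformE (G : WeightedGraph V) : Prop :=
  ∃ C : ℝ, 1 < C ∧ ∀ (x y : V) (R : ℝ), 0 < R → G.mexit x R ≤ C * G.mexit y R

/-- The mean value inequality `(MV)`. -/
def MV (G : WeightedGraph V) : Prop :=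
  ∃ C : ℝ, 0 < C ∧ ∀ (x : V) (R : ℝ) (u : V → ℝ), 0 < R → (∀ y, 0 ≤ u y) →
    G.Harmonic (G.ball x R) u →
    u x ≤ C / G.vol x R * ∑' y : G.ball x R, u y.1 * G.mu y.1

/-- The local diagonal upper estimate `(DUE)`. -/
def DUE (G : WeightedGraph V) : Prop :=
  ∃ C : ℝ, 0 < C ∧ ∀ (x : V) (n : ℕ), 0 < n →
    G.hk n x x ≤ C / G.vol x (G.einv x n)

/-- The off-diagonal upper estimate `(UE)`. -/
def UE (G : WeightedGraph V) : Prop :=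
  ∃ C β c : ℝ, 0 < C ∧ 1 < β ∧ 0 < c ∧ ∀ (x y : V) (n : ℕ), 0 < n →
    G.hk n x y ≤ C / G.vol x (G.einv x n) *
      Real.exp (-(c * (G.mexit x (G.gdist x y) / n) ^ ((1 : ℝ) / (β - 1))))

/-- A nonnegative Dirichlet solution of the heat equation `P^A u_n = u_{n+1}` up to time `N`. -/
def DirSol (G : WeightedGraph V) (A : Set V) (N : ℕ) (u : ℕ → V → ℝ) : Prop :=
  (∀ n y, 0 ≤ u n y) ∧ ∀ n, n < N → ∀ z ∈ A, (∑' y, G.PstepA A z y * u n y) = u (n + 1) z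

/-- The parabolic mean value inequality `(PMV)`. -/
def PMV (G : WeightedGraph V) : Prop :=
  ∃ c1 c2 C : ℝ, 0 ≤ c1 ∧ c1 < c2 ∧ 1 < C ∧
    ∀ (x : V) (R : ℝ) (u : ℕ → V → ℝ), 0 < R →
      G.DirSol (G.ball x R) ⌊c2 * G.mexit x R⌋₊ u →
      u ⌊c2 * G.mexit x R⌋₊ x ≤ C / (G.vol x R * G.mexit x R) *
        ∑ i ∈ Finset.Icc ⌊c1 * G.mexit x R⌋₊ ⌊c2 * G.mexit x R⌋₊,
          ∑' y : G.ball x R, u i y.1 * G.mu y.1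

/-- The skewed parabolic mean value inequality. -/
def SPMV (G : WeightedGraph V) : Prop :=
  ∃ c1 c2 C : ℝ, 0 < c1 ∧ c1 < c2 ∧ 1 ≤ C ∧
    ∀ (x : V) (R : ℝ) (y : V) (u : ℕ → V → ℝ), 0 < R → y ∈ G.ball x R →
      G.DirSol (G.ball x R) ⌊c2 * G.mexit x R⌋₊ u →
      u ⌊c2 * G.mexit x R⌋₊ x ≤ C / (G.vol y (2 * R) * G.mexit y (2 * R)) *
        ∑ i ∈ Finset.Icc ⌊c1 * G.mexit x R⌋₊ ⌊c2 * G.mexit x R⌋₊,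
          ∑' z : G.ball x R, u i z.1 * G.mu z.1

/-- The mean value property for Green kernels `(MVG)`. -/
def MVG (G : WeightedGraph V) : Prop :=
  ∃ C : ℝ, 1 < C ∧ ∀ (x : V) (R : ℝ) (y : V), 0 < R → 0 < G.gdist x y →
    G.green (G.ball x R) y x ≤ C / G.vol x (G.gdist x y) *
      ∑' z : G.ball x (G.gdist x y : ℝ), G.green (G.ball x R) y z.1 * G.mu z.1

/-- The Green kernel bound `(g01)`: `g^B(y,x) ≤ C·E(x,R)/V(x,d(x,y))`. -/
def G01 (G : WeightedGraph V) : Prop :=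
  ∃ C : ℝ, 1 < C ∧ ∀ (x : V) (R : ℝ) (y : V), 0 < R → 0 < G.gdist x y →
    G.green (G.ball x R) y x ≤ C * G.mexit x R / G.vol x (G.gdist x y)

/-- The elliptic Harnack inequality `(H)`. -/
def EH (G : WeightedGraph V) : Prop :=
  ∃ C : ℝ, 0 < C ∧ ∀ (x : V) (R : ℝ) (u : V → ℝ), 0 < R → (∀ y, 0 ≤ u y) →
    G.Harmonic (G.ball x (2 * R)) u → ∀ y ∈ G.ball x R, ∀ z ∈ G.ball x R, u y ≤ C * u z

/-- The sub-Gaussian upper estimate `(UE_F)` with respect to `F`. -/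
def UEF (G : WeightedGraph V) (F : ℕ → ℝ) : Prop :=
  ∃ C c : ℝ, 0 < C ∧ 0 < c ∧ ∀ (x y : V) (n : ℕ), 0 < n →
    G.hk n x y ≤ C / G.vol x (finvF F n) *
      Real.exp (-(c * (kkerF F n (G.gdist x y) : ℝ)))

/-- The sub-Gaussian lower estimate `(LE_F)` with respect to `F`. -/
def LEF (G : WeightedGraph V) (F : ℕ → ℝ) : Prop :=
  ∃ c C : ℝ, 0 < c ∧ 0 < C ∧ ∀ (x y : V) (n : ℕ), 0 < n →
    c / G.vol x (finvF F n) * Real.exp (-(C * (kkerF F n (G.gdist x y) : ℝ))) ≤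
      G.hk n x y + G.hk (n + 1) x y

/-- The `F`-parabolic Harnack inequality. -/
def PHF (G : WeightedGraph V) (F : ℕ → ℝ) : Prop :=
  ∀ c1 c2 c3 c4 η : ℝ, 0 < c1 → c1 < c2 → c2 < c3 → c3 < c4 → 0 < η → η < 1 →
    ∃ CH : ℝ, 0 < CH ∧ ∀ (x : V) (R k : ℕ) (u : ℕ → V → ℝ), 0 < R →
      (∀ n y, 0 ≤ u n y) →
      (∀ n : ℕ, k ≤ n → (n : ℝ) < (k : ℝ) + F ⌊c4 * (R : ℝ)⌋₊ → ∀ z ∈ G.ball x R,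
        (∑' y, G.Pstep z y * u n y) = u (n + 1) z) →
      ∀ (nm np : ℕ), ∀ xm ∈ G.ball x (η * R), ∀ xp ∈ G.ball x (η * R),
        (k : ℝ) + F ⌊c1 * (R : ℝ)⌋₊ ≤ (nm : ℝ) → (nm : ℝ) ≤ (k : ℝ) + F ⌊c2 * (R : ℝ)⌋₊ →
        (k : ℝ) + F ⌊c3 * (R : ℝ)⌋₊ ≤ (np : ℝ) → (np : ℝ) ≤ (k : ℝ) + F ⌊c4 * (R : ℝ)⌋₊ →
        (G.gdist xm xp : ℝ) ≤ (np : ℝ) - (nm : ℝ) →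
        u nm xm ≤ CH * (u np xp + u (np + 1) xp)

end WeightedGraph

open WeightedGraph

/-!
Fix a ball `A = B(x, R)` and let `u = E_·(A)`. Since `A` is finite and the graph is connected
and infinite, from every point of `A` the walk leaves `A` within `L` steps with probability at
least `ε > 0`, so survival probabilities decay geometrically and `u` is finite. First-step
analysis gives `μ(y) u(y) - Σ_z μ_{yz} u(z) = μ(y)` on `A`, hence Green's formula
`ℰ(f, u) = Σ_A f μ` for every `f` vanishing off `A`. Take `f` equal to `1` on `B(x, R/2)`,
`0` off `B(x, R)` and `2/R`-Lipschitz along edges. By Cauchy–Schwarz,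
`V(x, R/2)² ≤ ℰ(f, u)² ≤ ℰ(f, f) ℰ(u, u) ≤ (4/R²) V(x, R) · C E(x, R) V(x, R)`,
and volume doubling turns this into `R² ≤ 4 C D² E(x, R)`.
-/

lemma abs_clamp_sub_clamp_le (a b : ℝ) :
    |max 0 (min 1 a) - max 0 (min 1 b)| ≤ |a - b| := by
  rw [max_comm 0, max_comm 0]
  refine (abs_max_sub_max_le_abs _ _ 0).trans ?_
  simpa using abs_min_sub_min_le_max 1 a 1 b

namespace WeightedGraph

open Filter Topology

variable {V : Type*} (G : WeightedGraph V)

lemma summable_w (x : V) : Summable (G.w x) := by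
  refine summable_of_ne_finset_zero (s := (G.locFin x).toFinset) fun y hy => ?_
  by_contra h
  exact hy ((G.locFin x).mem_toFinset.2 ((G.w_nonneg x y).lt_of_ne' h))

lemma w_le_mu (x y : V) : G.w x y ≤ G.mu x :=
  (G.summable_w x).le_tsum y fun z _ => G.w_nonneg x z

lemma mu_nonneg (x : V) : 0 ≤ G.mu x := tsum_nonneg (G.w_nonneg x)

lemma pstep_nonneg (x y : V) : 0 ≤ G.Pstep x y := div_nonneg (G.w_nonneg x y) (G.mu_nonneg x)

lemma pstep_pos {x y : V} (h : 0 < G.w x y) : 0 < G.Pstep x y :=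
  div_pos h (h.trans_le (G.w_le_mu x y))

lemma sum_pstep_le_one (s : Finset V) (x : V) : ∑ y ∈ s, G.Pstep x y ≤ 1 := by
  calc ∑ y ∈ s, G.Pstep x y ≤ ∑' y, G.Pstep x y :=
        ((G.summable_w x).div_const _).sum_le_tsum s fun y _ => G.pstep_nonneg x y
    _ = G.mu x / G.mu x := tsum_div_const
    _ ≤ 1 := div_self_le_one _

lemma exists_adj [Nontrivial V] (hconn : G.toSimpleGraph.Connected) (x : V) :
    ∃ y, 0 < G.w x y := by
  obtain ⟨y, hy⟩ := exists_ne x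
  obtain ⟨z, hadj, -, -⟩ := (hconn.preconnected x y).some.exists_eq_cons_of_ne hy.symm
  exact ⟨z, hadj⟩

lemma mu_pos [Nontrivial V] (hconn : G.toSimpleGraph.Connected) (x : V) : 0 < G.mu x := by
  obtain ⟨y, hy⟩ := G.exists_adj hconn x
  exact hy.trans_le (G.w_le_mu x y)

lemma gdist_le_gdist_add_one {x y z : V} (hyz : 0 < G.w y z) : G.gdist x z ≤ G.gdist x y + 1 := by
  have := SimpleGraph.Adj.diff_dist_adj (G := G.toSimpleGraph) (u := x) hyz
  simp only [gdist]
  omega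

lemma finite_setOf_gdist_le (hconn : G.toSimpleGraph.Connected) (x : V) (n : ℕ) :
    {y | G.gdist x y ≤ n}.Finite := by
  induction n with
  | zero =>
    refine (Set.finite_singleton x).subset fun y hy => ?_
    exact (hconn.dist_eq_zero_iff.1 (Nat.le_zero.1 hy)).symm
  | succ n ih =>
    refine (ih.union (ih.biUnion fun z _ => G.locFin z)).subset fun y hy => ?_
    by_cases hle : G.gdist x y ≤ n
    · exact Or.inl hle
    · have hne : x ≠ y := by rintro rfl; simp [gdist] at hle
      obtain ⟨p, hp⟩ := hconn.exists_walk_length_eq_dist x y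
      obtain ⟨z, hadj, q, hq⟩ := p.reverse.exists_eq_cons_of_ne hne.symm
      have hlen : q.length + 1 = G.gdist x y := by
        simpa [hp, gdist] using (congrArg SimpleGraph.Walk.length hq).symm
      have hz : G.gdist x z ≤ n := by
        have := SimpleGraph.dist_le q.reverse
        simp only [SimpleGraph.Walk.length_reverse] at this
        simp only [gdist, Set.mem_ofPred_eq] at hy hlen ⊢
        omega
      exact Or.inr (Set.mem_biUnion hz (show 0 < G.w z y by rw [G.w_symm]; exact hadj))

lemma finite_ball (hconn : G.toSimpleGraph.Connected) (x : V) (r : ℝ) : (G.ball x r).Finite :=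
  (G.finite_setOf_gdist_le hconn x ⌈r⌉₊).subset fun _ hy =>
    Nat.cast_le.1 ((le_of_lt hy).trans (Nat.le_ceil r))

lemma vol_eq_sum {x : V} {r : ℝ} (h : (G.ball x r).Finite) :
    G.vol x r = ∑ y ∈ h.toFinset, G.mu y := by
  rw [vol, tsum_subtype (G.ball x r) G.mu, tsum_eq_sum (s := h.toFinset)]
  · exact Finset.sum_congr rfl fun y hy => Set.indicator_of_mem (h.mem_toFinset.1 hy) _
  · exact fun y hy => Set.indicator_of_notMem (fun h' => hy (h.mem_toFinset.2 h')) _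

lemma vol_pos [Nontrivial V] (hconn : G.toSimpleGraph.Connected) (x : V) {r : ℝ} (hr : 0 < r) :
    0 < G.vol x r := by
  have hx : x ∈ G.ball x r := by simpa [ball, gdist] using hr
  rw [G.vol_eq_sum (G.finite_ball hconn x r)]
  exact (G.mu_pos hconn x).trans_le <| Finset.single_le_sum (fun y _ => G.mu_nonneg y)
    ((G.finite_ball hconn x r).mem_toFinset.2 hx)

section KilledWalk

variable (A : Set V)

lemma pstepA_nonneg (x y : V) : 0 ≤ G.PstepA A x y := by
  unfold PstepA
  split_ifs
  exacts [G.pstep_nonneg x y, le_rfl]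

lemma pstepA_le_pstep (x y : V) : G.PstepA A x y ≤ G.Pstep x y := by
  unfold PstepA
  split_ifs
  exacts [le_rfl, G.pstep_nonneg x y]

lemma pstepA_of_notMem_left {x : V} (hx : x ∉ A) (y : V) : G.PstepA A x y = 0 :=
  if_neg fun h => hx h.1

lemma pstepA_of_notMem_right {y : V} (hy : y ∉ A) (x : V) : G.PstepA A x y = 0 :=
  if_neg fun h => hy h.2

lemma pnA_nonneg (n : ℕ) (x y : V) : 0 ≤ G.PnA A n x y := by
  induction n generalizing x with
  | zero => unfold PnA; split_ifs <;> norm_num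
  | succ n ih => exact tsum_nonneg fun z => mul_nonneg (G.pstepA_nonneg A x z) (ih z)

lemma pnA_of_notMem_left {x : V} (hx : x ∉ A) (n : ℕ) (y : V) : G.PnA A n x y = 0 := by
  cases n with
  | zero => simp [PnA, hx]
  | succ n => simp [PnA, G.pstepA_of_notMem_left A hx]

lemma pnA_of_notMem_right {y : V} (hy : y ∉ A) (n : ℕ) (x : V) : G.PnA A n x y = 0 := by
  induction n generalizing x with
  | zero => simp only [PnA]; exact if_neg fun ⟨hxy, hx⟩ => hy (hxy ▸ hx)
  | succ n ih => simp [PnA, ih]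

/-- `P_z(T_A > n)`. -/
def survivalProb (n : ℕ) (z : V) : ℝ := ∑' y, G.PnA A n z y

lemma survivalProb_nonneg (n : ℕ) (z : V) : 0 ≤ G.survivalProb A n z :=
  tsum_nonneg fun y => G.pnA_nonneg A n z y

lemma survivalProb_of_notMem {z : V} (hz : z ∉ A) (n : ℕ) : G.survivalProb A n z = 0 := by
  simp [survivalProb, G.pnA_of_notMem_left A hz]

lemma survivalProb_zero {z : V} (hz : z ∈ A) : G.survivalProb A 0 z = 1 := by
  simp [survivalProb, PnA, hz]

lemma meanExit_nonneg (z : V) : 0 ≤ G.meanExit A z :=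
  tsum_nonneg fun n => G.survivalProb_nonneg A n z

lemma meanExit_of_notMem {z : V} (hz : z ∉ A) : G.meanExit A z = 0 := by
  simp [meanExit, G.pnA_of_notMem_left A hz]

variable {A} (hA : A.Finite)
include hA

lemma survivalProb_succ (n : ℕ) (z : V) :
    G.survivalProb A (n + 1) z = ∑ w ∈ hA.toFinset, G.PstepA A z w * G.survivalProb A n w := by
  have hout : ∀ w ∉ hA.toFinset, w ∉ A := fun w hw h => hw (hA.mem_toFinset.2 h)
  have hinner : ∀ y, ∑' w, G.PstepA A z w * G.PnA A n w y =
      ∑ w ∈ hA.toFinset, G.PstepA A z w * G.PnA A n w y := fun y =>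
    tsum_eq_sum fun w hw => by rw [G.pstepA_of_notMem_right A (hout w hw), zero_mul]
  simp only [survivalProb, PnA, hinner]
  rw [tsum_eq_sum fun y hy => Finset.sum_eq_zero fun w _ => by
    rw [G.pnA_of_notMem_right A (hout y hy), mul_zero], Finset.sum_comm]
  refine Finset.sum_congr rfl fun w _ => ?_
  rw [← Finset.mul_sum, tsum_eq_sum fun y hy => G.pnA_of_notMem_right A (hout y hy) n w]

lemma survivalProb_le_one (n : ℕ) (z : V) : G.survivalProb A n z ≤ 1 := by
  induction n generalizing z with
  | zero =>
    by_cases hz : z ∈ A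
    · exact (G.survivalProb_zero A hz).le
    · exact (G.survivalProb_of_notMem A hz 0).trans_le zero_le_one
  | succ n ih =>
    rw [G.survivalProb_succ hA]
    calc ∑ w ∈ hA.toFinset, G.PstepA A z w * G.survivalProb A n w
        ≤ ∑ w ∈ hA.toFinset, G.Pstep z w := Finset.sum_le_sum fun w _ =>
          mul_le_of_le_one_right (G.pstepA_nonneg A z w) (ih w) |>.trans (G.pstepA_le_pstep A z w)
      _ ≤ 1 := G.sum_pstep_le_one _ z

lemma survivalProb_succ_le (n : ℕ) (a b : V) :
    G.survivalProb A (n + 1) a ≤ 1 - G.Pstep a b * (1 - G.survivalProb A n b) := by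
  set s := insert b hA.toFinset
  have hb : b ∈ s := Finset.mem_insert_self b _
  calc G.survivalProb A (n + 1) a
      ≤ ∑ w ∈ s, G.Pstep a w * G.survivalProb A n w := by
        rw [G.survivalProb_succ hA]
        refine (Finset.sum_le_sum fun w _ => mul_le_mul_of_nonneg_right
          (G.pstepA_le_pstep A a w) (G.survivalProb_nonneg A n w)).trans ?_
        exact Finset.sum_le_sum_of_subset_of_nonneg (Finset.subset_insert b _) fun w _ _ =>
          mul_nonneg (G.pstep_nonneg a w) (G.survivalProb_nonneg A n w)
    _ ≤ G.Pstep a b * G.survivalProb A n b + ∑ w ∈ s.erase b, G.Pstep a w := by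
        rw [← Finset.add_sum_erase s _ hb]
        gcongr with w
        exact mul_le_of_le_one_right (G.pstep_nonneg a w) (G.survivalProb_le_one hA n w)
    _ = 1 - G.Pstep a b * (1 - G.survivalProb A n b) - (1 - ∑ w ∈ s, G.Pstep a w) := by
        rw [← Finset.add_sum_erase s _ hb]
        ring
    _ ≤ 1 - G.Pstep a b * (1 - G.survivalProb A n b) := by
        linarith [G.sum_pstep_le_one s a]

lemma exists_survivalProb_le_of_walk {v : V} (hv : v ∉ A) {w : V} (p : G.toSimpleGraph.Walk w v) :
    ∃ π > 0, ∀ n, p.length ≤ n → G.survivalProb A n w ≤ 1 - π := by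
  induction p with
  | nil =>
    exact ⟨1, one_pos, fun n _ => by rw [G.survivalProb_of_notMem A hv]; norm_num⟩
  | @cons a b _ hab q ih =>
    obtain ⟨π, hπ, hq⟩ := ih hv
    refine ⟨G.Pstep a b * π, mul_pos (G.pstep_pos hab) hπ, fun n hn => ?_⟩
    obtain ⟨m, rfl⟩ : ∃ m, n = m + 1 := ⟨n - 1, by simp at hn; omega⟩
    have hm : π ≤ 1 - G.survivalProb A m b := by
      linarith [hq m (by simpa using hn)]
    calc G.survivalProb A (m + 1) a ≤ 1 - G.Pstep a b * (1 - G.survivalProb A m b) :=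
          G.survivalProb_succ_le hA m a b
      _ ≤ 1 - G.Pstep a b * π := by gcongr; exact G.pstep_nonneg a b

lemma exists_survivalProb_le_one_sub [Infinite V] (hconn : G.toSimpleGraph.Connected) :
    ∃ (L : ℕ) (ε : ℝ), 0 < ε ∧ ∀ z ∈ A, G.survivalProb A L z ≤ 1 - ε := by
  obtain ⟨v, hv⟩ := hA.infinite_compl.nonempty
  -- Along `atTop ×ˢ 𝓝[>] 0` the per-vertex bounds become uniform over the finite set `A`.
  -- Along `atTop ×ˢ 𝓝[>] 0` the per-vertex bounds become uniform over the finite set `A`.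
  have hz : ∀ z, ∀ᶠ q : ℕ × ℝ in atTop ×ˢ 𝓝[>] 0,
      G.survivalProb A q.1 z ≤ 1 - q.2 := by
    intro z
    let p := (hconn.preconnected z v).some
    obtain ⟨π, hπ, h⟩ := G.exists_survivalProb_le_of_walk hA hv p
    filter_upwards [(eventually_ge_atTop p.length).prod_mk (Ioo_mem_nhdsGT hπ)] with q hq
    linarith [h q.1 hq.1, hq.2.2]
  obtain ⟨⟨L, ε⟩, hL, hε⟩ := (((eventually_all_finite hA).2 fun z _ => hz z).and
    (eventually_mem_nhdsWithin.prod_inr _)).exists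
  exact ⟨L, ε, hε, hL⟩

lemma survivalProb_add_le {L : ℕ} {ε : ℝ} (hL : ∀ z ∈ A, G.survivalProb A L z ≤ 1 - ε)
    (m : ℕ) (z : V) : G.survivalProb A (m + L) z ≤ (1 - ε) * G.survivalProb A m z := by
  induction m generalizing z with
  | zero =>
    by_cases hz : z ∈ A
    · simpa [G.survivalProb_zero A hz] using hL z hz
    · simp [G.survivalProb_of_notMem A hz]
  | succ m ih =>
    rw [Nat.add_right_comm, G.survivalProb_succ hA, G.survivalProb_succ hA, Finset.mul_sum]
    refine Finset.sum_le_sum fun w _ => ?_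
    calc G.PstepA A z w * G.survivalProb A (m + L) w
        ≤ G.PstepA A z w * ((1 - ε) * G.survivalProb A m w) := by
          gcongr
          · exact G.pstepA_nonneg A z w
          · exact ih w
      _ = (1 - ε) * (G.PstepA A z w * G.survivalProb A m w) := by ring

variable [Infinite V] (hconn : G.toSimpleGraph.Connected)
include hconn

lemma summable_survivalProb (z : V) : Summable (G.survivalProb A · z) := by
  obtain ⟨L, ε, hε, hL⟩ := G.exists_survivalProb_le_one_sub hA hconn
  refine summable_of_sum_range_le (c := L / ε) (G.survivalProb_nonneg A · z) fun N => ?_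
  set S := ∑ n ∈ Finset.range N, G.survivalProb A n z
  have hS : S ≤ L + (1 - ε) * S := calc
    S ≤ ∑ n ∈ Finset.range (L + N), G.survivalProb A n z :=
        Finset.sum_le_sum_of_subset_of_nonneg (Finset.range_subset_range.2 (by omega))
          fun n _ _ => G.survivalProb_nonneg A n z
    _ = ∑ n ∈ Finset.range L, G.survivalProb A n z +
          ∑ n ∈ Finset.range N, G.survivalProb A (n + L) z := by
        rw [Finset.sum_range_add]; simp_rw [add_comm L]
    _ ≤ L + (1 - ε) * S := by
        gcongr
        · simpa using Finset.sum_le_sum fun n (_ : n ∈ Finset.range L) =>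
            G.survivalProb_le_one hA n z
        · rw [Finset.mul_sum]
          exact Finset.sum_le_sum fun n _ => G.survivalProb_add_le hA hL n z
  rw [le_div_iff₀ hε]
  linarith

lemma meanExit_eq_one_add {y : V} (hy : y ∈ A) :
    G.meanExit A y = 1 + ∑' z, G.Pstep y z * G.meanExit A z := by
  have hsurv : ∀ z, G.meanExit A z = ∑' n, G.survivalProb A n z := fun z => rfl
  have hstep : ∀ z, G.PstepA A y z * G.meanExit A z = G.Pstep y z * G.meanExit A z := by
    intro z
    by_cases hz : z ∈ A
    · rw [PstepA, if_pos ⟨hy, hz⟩]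
    · simp [G.meanExit_of_notMem A hz]
  rw [hsurv, (G.summable_survivalProb hA hconn y).tsum_eq_zero_add, G.survivalProb_zero A hy]
  simp_rw [G.survivalProb_succ hA]
  rw [Summable.tsum_finsetSum fun z _ => (G.summable_survivalProb hA hconn z).mul_left _,
    tsum_eq_sum (s := hA.toFinset) fun z hz => by
      rw [G.meanExit_of_notMem A fun h => hz (hA.mem_toFinset.2 h), mul_zero]]
  simp_rw [tsum_mul_left, ← hsurv, hstep]

lemma mu_mul_meanExit {y : V} (hy : y ∈ A) :
    G.mu y * G.meanExit A y = G.mu y + ∑' z, G.w y z * G.meanExit A z := by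
  have hmu := (G.mu_pos hconn y).ne'
  rw [G.meanExit_eq_one_add hA hconn hy, mul_add, mul_one, ← tsum_mul_left]
  congr 1
  refine tsum_congr fun z => ?_
  rw [Pstep]
  field_simp

lemma sum_w_mul_meanExit_sub {T : Finset V} {y : V} (hy : y ∈ A)
    (hT : ∀ z, 0 < G.w y z → z ∈ T) :
    ∑ z ∈ T, G.w y z * (G.meanExit A y - G.meanExit A z) = G.mu y := by
  have hw : ∀ z ∉ T, G.w y z = 0 := fun z hz =>
    (G.w_nonneg y z).antisymm' (not_lt.1 fun h => hz (hT z h))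
  have hmu : G.mu y = ∑ z ∈ T, G.w y z := tsum_eq_sum hw
  have hwE : ∑' z, G.w y z * G.meanExit A z = ∑ z ∈ T, G.w y z * G.meanExit A z :=
    tsum_eq_sum fun z hz => by rw [hw z hz, zero_mul]
  have := G.mu_mul_meanExit hA hconn hy
  simp only [mul_sub, Finset.sum_sub_distrib, ← Finset.sum_mul]
  rw [← hmu, ← hwE]
  linarith

end KilledWalk

section EdgeForm

variable (T : Finset V)

/-- Twice the Dirichlet form `ℰ(g, h)` restricted to edges with both ends in `T`. -/
def edgeForm (g h : V → ℝ) : ℝ :=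
  ∑ y ∈ T, ∑ z ∈ T, G.w y z * ((g y - g z) * (h y - h z))

lemma edgeForm_sq_le (g h : V → ℝ) :
    G.edgeForm T g h ^ 2 ≤ G.edgeForm T g g * G.edgeForm T h h := by
  simp only [edgeForm, ← Finset.sum_product']
  refine Finset.sum_sq_le_sum_mul_sum_of_sq_le_mul _
    (fun p _ => mul_nonneg (G.w_nonneg _ _) (mul_self_nonneg _))
    (fun p _ => mul_nonneg (G.w_nonneg _ _) (mul_self_nonneg _)) fun p _ => le_of_eq ?_
  ring

lemma edgeForm_eq_two_mul (g h : V → ℝ) :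
    G.edgeForm T g h = 2 * ∑ y ∈ T, g y * ∑ z ∈ T, G.w y z * (h y - h z) := by
  have hswap : ∑ y ∈ T, ∑ z ∈ T, G.w y z * (g z * (h y - h z)) =
      -∑ y ∈ T, ∑ z ∈ T, G.w y z * (g y * (h y - h z)) := by
    rw [Finset.sum_comm, ← Finset.sum_neg_distrib]
    refine Finset.sum_congr rfl fun y _ => ?_
    rw [← Finset.sum_neg_distrib]
    refine Finset.sum_congr rfl fun z _ => ?_
    rw [G.w_symm z y]
    ring
  have hsplit : G.edgeForm T g h = ∑ y ∈ T, ∑ z ∈ T, G.w y z * (g y * (h y - h z)) -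
      ∑ y ∈ T, ∑ z ∈ T, G.w y z * (g z * (h y - h z)) := by
    simp only [edgeForm, ← Finset.sum_sub_distrib]
    exact Finset.sum_congr rfl fun y _ => Finset.sum_congr rfl fun z _ => by ring
  rw [hsplit, hswap, sub_neg_eq_add, ← two_mul]
  simp only [Finset.mul_sum]
  exact Finset.sum_congr rfl fun y _ => Finset.sum_congr rfl fun z _ => by ring

lemma edgeForm_self_le {S : Finset V} {g : V → ℝ} {K : ℝ} (hg : ∀ y ∉ S, g y = 0)
    (hK : ∀ y z, 0 < G.w y z → |g y - g z| ≤ K) :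
    G.edgeForm T g g ≤ 2 * K ^ 2 * ∑ y ∈ S, G.mu y := by
  have hterm : ∀ y z, G.w y z * ((g y - g z) * (g y - g z)) ≤
      K ^ 2 * ((if y ∈ S then G.w y z else 0) + (if z ∈ S then G.w y z else 0)) := by
    intro y z
    rcases (G.w_nonneg y z).lt_or_eq with hw | hw
    · have hsq : (g y - g z) * (g y - g z) ≤ K ^ 2 := by
        rw [← sq, ← sq_abs]
        exact pow_le_pow_left₀ (abs_nonneg _) (hK y z hw) 2
      by_cases hy : y ∈ S <;> by_cases hz : z ∈ S <;> simp only [hy, hz, if_true, if_false]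
      · nlinarith
      · nlinarith
      · nlinarith
      · simp [hg y hy, hg z hz]
    · simp only [← hw, zero_mul, ite_self, add_zero, mul_zero, le_refl]
  have hrow :
      ∑ y ∈ T, ∑ z ∈ T, (if y ∈ S then G.w y z else 0) ≤ ∑ y ∈ S, G.mu y := by
    calc ∑ y ∈ T, ∑ z ∈ T, (if y ∈ S then G.w y z else 0)
        = ∑ y ∈ T ∩ S, ∑ z ∈ T, G.w y z := by
          rw [← Finset.sum_ite_mem]
          exact Finset.sum_congr rfl fun y _ => by split_ifs <;> simp
      _ ≤ ∑ y ∈ T ∩ S, G.mu y := Finset.sum_le_sum fun y _ =>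
          (G.summable_w y).sum_le_tsum T fun z _ => G.w_nonneg y z
      _ ≤ ∑ y ∈ S, G.mu y := Finset.sum_le_sum_of_subset_of_nonneg Finset.inter_subset_right
          fun y _ _ => G.mu_nonneg y
  have hcol : ∑ y ∈ T, ∑ z ∈ T, (if z ∈ S then G.w y z else 0) =
      ∑ y ∈ T, ∑ z ∈ T, (if y ∈ S then G.w y z else 0) := by
    rw [Finset.sum_comm]
    simp_rw [G.w_symm]
  calc G.edgeForm T g g
      ≤ ∑ y ∈ T, ∑ z ∈ T,
          K ^ 2 * ((if y ∈ S then G.w y z else 0) + (if z ∈ S then G.w y z else 0)) :=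
        Finset.sum_le_sum fun y _ => Finset.sum_le_sum fun z _ => hterm y z
    _ = K ^ 2 * (2 * ∑ y ∈ T, ∑ z ∈ T, (if y ∈ S then G.w y z else 0)) := by
        simp only [← Finset.mul_sum, Finset.sum_add_distrib, hcol]
        ring
    _ ≤ 2 * K ^ 2 * ∑ y ∈ S, G.mu y := by nlinarith [sq_nonneg K]

end EdgeForm

section Capacity

variable [Infinite V] {A : Set V} (hA : A.Finite) (hconn : G.toSimpleGraph.Connected)
include hA hconn

lemma edgeForm_meanExit {T : Finset V} (hTA : hA.toFinset ⊆ T)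
    (hT : ∀ y ∈ A, ∀ z, 0 < G.w y z → z ∈ T) {g : V → ℝ} (hg : ∀ y ∉ A, g y = 0) :
    G.edgeForm T g (G.meanExit A) = 2 * ∑ y ∈ hA.toFinset, g y * G.mu y := by
  rw [G.edgeForm_eq_two_mul, ← Finset.sum_subset hTA]
  · refine congrArg _ (Finset.sum_congr rfl fun y hy => ?_)
    have hyA := hA.mem_toFinset.1 hy
    rw [G.sum_w_mul_meanExit_sub hA hconn hyA (hT y hyA)]
  · intro y _ hy
    rw [hg y fun h => hy (hA.mem_toFinset.2 h), zero_mul]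

theorem sq_sum_mul_mu_le {g : V → ℝ} {K : ℝ} (hg : ∀ y ∉ A, g y = 0)
    (hK : ∀ y z, 0 < G.w y z → |g y - g z| ≤ K) :
    (∑ y ∈ hA.toFinset, g y * G.mu y) ^ 2 ≤
      K ^ 2 * (∑ y ∈ hA.toFinset, G.mu y) * ∑ y ∈ hA.toFinset, G.meanExit A y * G.mu y := by
  set T := hA.toFinset ∪ hA.toFinset.biUnion fun y => (G.locFin y).toFinset
  have hTA : hA.toFinset ⊆ T := Finset.subset_union_left
  have hT : ∀ y ∈ A, ∀ z, 0 < G.w y z → z ∈ T := fun y hy z hz =>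
    Finset.mem_union_right _ <|
      Finset.mem_biUnion.2 ⟨y, hA.mem_toFinset.2 hy, (G.locFin y).mem_toFinset.2 hz⟩
  have hgg := G.edgeForm_self_le T (S := hA.toFinset)
    (fun y hy => hg y fun h => hy (hA.mem_toFinset.2 h)) hK
  have hCS := G.edgeForm_sq_le T g (G.meanExit A)
  rw [G.edgeForm_meanExit hA hconn hTA hT hg,
    G.edgeForm_meanExit hA hconn hTA hT fun y hy => G.meanExit_of_notMem A hy] at hCS
  have hE : 0 ≤ ∑ y ∈ hA.toFinset, G.meanExit A y * G.mu y :=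
    Finset.sum_nonneg fun y _ => mul_nonneg (G.meanExit_nonneg A y) (G.mu_nonneg y)
  nlinarith [mul_le_mul_of_nonneg_right hgg hE]

end Capacity

section Cutoff

def cutoff (x : V) (R : ℝ) (y : V) : ℝ := max 0 (min 1 (2 - 2 * G.gdist x y / R))

variable {x : V} {R : ℝ} (hR : 0 < R)
include hR

lemma cutoff_of_notMem_ball {y : V} (hy : y ∉ G.ball x R) : G.cutoff x R y = 0 := by
  have hle : R ≤ G.gdist x y := not_lt.1 hy
  refine max_eq_left ((min_le_right _ _).trans ?_)
  rw [sub_nonpos, le_div_iff₀ hR]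
  linarith

lemma cutoff_of_mem_ball_half {y : V} (hy : y ∈ G.ball x (R / 2)) : G.cutoff x R y = 1 := by
  have hlt : (G.gdist x y : ℝ) < R / 2 := hy
  have h1 : 1 ≤ 2 - 2 * G.gdist x y / R := by
    rw [le_sub_comm, div_le_iff₀ hR]
    linarith
  rw [cutoff, min_eq_left h1, max_eq_right zero_le_one]

lemma abs_cutoff_sub_le {y z : V} (hyz : 0 < G.w y z) :
    |G.cutoff x R y - G.cutoff x R z| ≤ 2 / R := by
  have hzy : 0 < G.w z y := G.w_symm y z ▸ hyz
  have hzy' : (G.gdist x z : ℝ) ≤ G.gdist x y + 1 := by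
    exact_mod_cast G.gdist_le_gdist_add_one hyz
  have hyz' : (G.gdist x y : ℝ) ≤ G.gdist x z + 1 := by
    exact_mod_cast G.gdist_le_gdist_add_one hzy
  have hd : |(G.gdist x z : ℝ) - G.gdist x y| ≤ 1 := abs_le.2 ⟨by linarith, by linarith⟩
  calc |G.cutoff x R y - G.cutoff x R z|
      ≤ |(2 - 2 * G.gdist x y / R) - (2 - 2 * G.gdist x z / R)| := abs_clamp_sub_clamp_le _ _
    _ = 2 / R * |(G.gdist x z : ℝ) - G.gdist x y| := by
        rw [← abs_of_pos (div_pos two_pos hR), ← abs_mul]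
        ring_nf
    _ ≤ 2 / R := mul_le_of_le_one_right (by positivity) hd

end Cutoff

theorem sq_mul_vol_half_sq_le [Infinite V] (hconn : G.toSimpleGraph.Connected) (x : V)
    {R M : ℝ} (hR : 0 < R) (hM : ∀ y ∈ G.ball x R, G.meanExit (G.ball x R) y ≤ M) :
    R ^ 2 * G.vol x (R / 2) ^ 2 ≤ 4 * M * G.vol x R ^ 2 := by
  have hA := G.finite_ball hconn x R
  have hA2 := G.finite_ball hconn x (R / 2)
  rw [G.vol_eq_sum hA, G.vol_eq_sum hA2]
  set VR := ∑ y ∈ hA.toFinset, G.mu y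
  have hhalf :
      ∑ y ∈ hA2.toFinset, G.mu y ≤ ∑ y ∈ hA.toFinset, G.cutoff x R y * G.mu y := calc
    _ = ∑ y ∈ hA2.toFinset, G.cutoff x R y * G.mu y := Finset.sum_congr rfl fun y hy => by
        rw [G.cutoff_of_mem_ball_half hR (hA2.mem_toFinset.1 hy), one_mul]
    _ ≤ _ := by
        refine Finset.sum_le_sum_of_subset_of_nonneg (fun y hy => ?_) fun y _ _ =>
          mul_nonneg (le_max_left _ _) (G.mu_nonneg y)
        have : (G.gdist x y : ℝ) < R / 2 := hA2.mem_toFinset.1 hy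
        exact hA.mem_toFinset.2 (show (G.gdist x y : ℝ) < R by linarith)
  have hexit : ∑ y ∈ hA.toFinset, G.meanExit (G.ball x R) y * G.mu y ≤ M * VR := by
    rw [Finset.mul_sum]
    exact Finset.sum_le_sum fun y hy =>
      mul_le_mul_of_nonneg_right (hM y (hA.mem_toFinset.1 hy)) (G.mu_nonneg y)
  have hcap := G.sq_sum_mul_mu_le hA hconn (fun y hy => G.cutoff_of_notMem_ball hR hy)
    (fun y z hyz => G.abs_cutoff_sub_le hR hyz)
  have hVR : 0 ≤ VR := Finset.sum_nonneg fun y _ => G.mu_nonneg y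
  calc R ^ 2 * (∑ y ∈ hA2.toFinset, G.mu y) ^ 2
      ≤ R ^ 2 * (∑ y ∈ hA.toFinset, G.cutoff x R y * G.mu y) ^ 2 := by
        gcongr
        exact Finset.sum_nonneg fun y _ => G.mu_nonneg y
    _ ≤ R ^ 2 * ((2 / R) ^ 2 * VR * (M * VR)) := by
        gcongr
        exact hcap.trans (mul_le_mul_of_nonneg_left hexit (by positivity))
    _ = 4 * M * VR ^ 2 := by field_simp; ring

end WeightedGraph

theorem mexit_quadratic_lower_general {V : Type*} [Infinite V]
    (G : WeightedGraph V) (hconn : G.toSimpleGraph.Connected)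
    (hVD : G.VD)
    (C : ℝ) (hC : 0 < C)
    (hEbar : ∀ (x : V) (R : ℝ), 0 < R → ∀ y ∈ G.ball x R,
      G.meanExit (G.ball x R) y ≤ C * G.mexit x R) :
    ∃ c : ℝ, 0 < c ∧ ∀ (x : V) (R : ℝ), 0 < R → c * R ^ 2 ≤ G.mexit x R := by
  obtain ⟨D, hD, hdoubling⟩ := hVD
  refine ⟨1 / (4 * D ^ 2 * C), by positivity, fun x R hR => ?_⟩
  have hhalf : 0 < G.vol x (R / 2) := G.vol_pos hconn x (by positivity)
  have hdoub : G.vol x R ≤ D * G.vol x (R / 2) := by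
    simpa [mul_div_cancel₀] using hdoubling x (R / 2) (by positivity)
  have hm : 0 ≤ G.mexit x R := G.meanExit_nonneg _ x
  have hkey : R ^ 2 * G.vol x (R / 2) ^ 2 ≤
      (4 * C * D ^ 2 * G.mexit x R) * G.vol x (R / 2) ^ 2 := calc
    _ ≤ 4 * (C * G.mexit x R) * G.vol x R ^ 2 :=
        G.sq_mul_vol_half_sq_le hconn x hR (hEbar x R hR)
    _ ≤ 4 * (C * G.mexit x R) * (D * G.vol x (R / 2)) ^ 2 := by
        gcongr
        exact (G.vol_pos hconn x hR).le
    _ = _ := by ring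
  have hR2 := le_of_mul_le_mul_right hkey (by positivity)
  rw [div_mul_eq_mul_div, one_mul, div_le_iff₀ (by positivity)]
  linarith

/-- **Corollary 3.11.** Under `(p0)`, `(VD)` and `max_{y∈B(x,R)} E_y(x,R) ≤ C·E(x,R)`,
one has `E(x,R) ≥ c·R²`. -/
theorem mexit_quadratic_lower {V : Type*} [Countable V] [Infinite V]
    (G : WeightedGraph V) (hconn : G.toSimpleGraph.Connected)
    (p0 : ℝ) (hp0 : 0 < p0) (hP0 : G.P0 p0) (hVD : G.VD)
    (C : ℝ) (hC : 0 < C)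
    (hEbar : ∀ (x : V) (R : ℝ), 0 < R → ∀ y ∈ G.ball x R,
      G.meanExit (G.ball x R) y ≤ C * G.mexit x R) :
    ∃ c : ℝ, 0 < c ∧ ∀ (x : V) (R : ℝ), 0 < R → c * R ^ 2 ≤ G.mexit x R :=
  mexit_quadratic_lower_general G hconn hVD C hC hEbar
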